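/- Convergence of the operators (Lemma 5.1): Let ξ_m ∈ ℝ, p_m ∈ ℝ^n \ {0}, and symmetric n×n matrices M_m be such that ξ_m → ξ, p_m → p with p ≠ 0, and M_m → M as m → ∞. Then H_m⁺(ξ_m, p_m, M_m) → −F(ξ, p, M) and H_m⁻(ξ_m, p_m, M_m) → −F(ξ, p, M) as m → ∞. -/

import Mathlib

open scoped RealInnerProductSpace
open Filter Topology

noncomputable section

namespace TugOfWar

/-- The quadratic form `vᵀ Σ M Σ v`, where `Σ = diag (σ 1, …, σ n)`. -/
def sigQF {n : ℕ} (σ : Fin n → ℝ) (M : Matrix (Fin n) (Fin n) ℝ)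
    (v : EuclideanSpace ℝ (Fin n)) : ℝ :=
  ∑ i, ∑ j, (σ i * v i) * M i j * (σ j * v j)

/-- `trace (Σ² M)`. -/
def trSig2 {n : ℕ} (σ : Fin n → ℝ) (M : Matrix (Fin n) (Fin n) ℝ) : ℝ :=
  ∑ i, σ i ^ 2 * M i i

/-- The integrand `Φ(θ⁺,θ⁻,d⁺,d⁻,p,M)`. -/
def Phi {n : ℕ} (σ : Fin n → ℝ) (μ : EuclideanSpace ℝ (Fin n))
    (θp θm : EuclideanSpace ℝ (Fin n)) (dp dm : ℝ)
    (p : EuclideanSpace ℝ (Fin n)) (M : Matrix (Fin n) (Fin n) ℝ) : ℝ :=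
  -(1 / 2) * sigQF σ M (θp - θm) - (1 / 2) * trSig2 σ M
    - (dp + dm) * ⟪θp + θm, p⟫ - ⟪μ, p⟫

/-- The control set `ℋ_m = S^{n-1} × [0, m]`. -/
def Hset (n : ℕ) (m : ℕ) : Set (EuclideanSpace ℝ (Fin n) × ℝ) :=
  {a | ‖a.1‖ = 1 ∧ a.2 ∈ Set.Icc (0 : ℝ) (m : ℝ)}

/-- `H_m⁺(ξ,p,M) = sup_{(θ⁻,d⁻)∈ℋ_m} inf_{(θ⁺,d⁺)∈ℋ_m} Φ + rξ`. -/
def Hplus {n : ℕ} (σ : Fin n → ℝ) (μ : EuclideanSpace ℝ (Fin n)) (r : ℝ) (m : ℕ)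
    (ξ : ℝ) (p : EuclideanSpace ℝ (Fin n)) (M : Matrix (Fin n) (Fin n) ℝ) : ℝ :=
  sSup ((fun a => sInf ((fun b => Phi σ μ b.1 a.1 b.2 a.2 p M) '' Hset n m)) '' Hset n m)
    + r * ξ

/-- `H_m⁻(ξ,p,M) = inf_{(θ⁺,d⁺)∈ℋ_m} sup_{(θ⁻,d⁻)∈ℋ_m} Φ + rξ`. -/
def Hminus {n : ℕ} (σ : Fin n → ℝ) (μ : EuclideanSpace ℝ (Fin n)) (r : ℝ) (m : ℕ)
    (ξ : ℝ) (p : EuclideanSpace ℝ (Fin n)) (M : Matrix (Fin n) (Fin n) ℝ) : ℝ :=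
  sInf ((fun b => sSup ((fun a => Phi σ μ b.1 a.1 b.2 a.2 p M) '' Hset n m)) '' Hset n m)
    + r * ξ

/-- The limit operator `F(ξ,p,M)`, for `p ≠ 0`. -/
def Fop {n : ℕ} (σ : Fin n → ℝ) (μ : EuclideanSpace ℝ (Fin n)) (r : ℝ)
    (ξ : ℝ) (p : EuclideanSpace ℝ (Fin n)) (M : Matrix (Fin n) (Fin n) ℝ) : ℝ :=
  (2 / ‖p‖ ^ 2) * sigQF σ M p + (1 / 2) * trSig2 σ M + ⟪μ, p⟫ - r * ξ

/-- `F^*(ξ,0,M) = limsup_{p → 0, p ≠ 0} F(ξ,p,M)`. -/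
def Fupper {n : ℕ} (σ : Fin n → ℝ) (μ : EuclideanSpace ℝ (Fin n)) (r : ℝ)
    (ξ : ℝ) (M : Matrix (Fin n) (Fin n) ℝ) : ℝ :=
  Filter.limsup (fun p => Fop σ μ r ξ p M) (𝓝[≠] (0 : EuclideanSpace ℝ (Fin n)))

/-- `F_*(ξ,0,M) = liminf_{p → 0, p ≠ 0} F(ξ,p,M)`. -/
def Flower {n : ℕ} (σ : Fin n → ℝ) (μ : EuclideanSpace ℝ (Fin n)) (r : ℝ)
    (ξ : ℝ) (M : Matrix (Fin n) (Fin n) ℝ) : ℝ :=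
  Filter.liminf (fun p => Fop σ μ r ξ p M) (𝓝[≠] (0 : EuclideanSpace ℝ (Fin n)))

/-- The parabolic domain `ℝ^n × [0,T]`. -/
def Dom (n : ℕ) (T : ℝ) : Set (EuclideanSpace ℝ (Fin n) × ℝ) :=
  Set.univ ×ˢ Set.Icc 0 T

/-- Test functions: `φ` is `C¹` in time with derivative `φt`, and `C²` in space with spatial
gradient `Dφ` and (symmetric) spatial Hessian `D2φ`, all jointly continuous. -/
def IsC12 {n : ℕ} (φ φt : EuclideanSpace ℝ (Fin n) → ℝ → ℝ)
    (Dφ : EuclideanSpace ℝ (Fin n) → ℝ → EuclideanSpace ℝ (Fin n))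
    (D2φ : EuclideanSpace ℝ (Fin n) → ℝ → Matrix (Fin n) (Fin n) ℝ) : Prop :=
  Continuous (fun q : EuclideanSpace ℝ (Fin n) × ℝ => φt q.1 q.2) ∧
  Continuous (fun q : EuclideanSpace ℝ (Fin n) × ℝ => Dφ q.1 q.2) ∧
  Continuous (fun q : EuclideanSpace ℝ (Fin n) × ℝ => D2φ q.1 q.2) ∧
  (∀ x t, HasDerivAt (fun s => φ x s) (φt x t) t) ∧
  (∀ x t, HasGradientAt (fun y => φ y t) (Dφ x t) x) ∧
  (∀ x t, HasFDerivAt (fun y => Dφ y t) (Matrix.toEuclideanCLM (𝕜 := ℝ) (D2φ x t)) x) ∧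
  (∀ x t, (D2φ x t).IsSymm)

/-- At most linear growth on `ℝ^n × [0,T]`. -/
def LinGrowth {n : ℕ} (T : ℝ) (u : EuclideanSpace ℝ (Fin n) → ℝ → ℝ) : Prop :=
  ∃ c : ℝ, ∀ x t, t ∈ Set.Icc 0 T → |u x t| ≤ c * (1 + ‖x‖)

/-- Continuity on `ℝ^n × [0,T]`. -/
def ContOn {n : ℕ} (T : ℝ) (u : EuclideanSpace ℝ (Fin n) → ℝ → ℝ) : Prop :=
  ContinuousOn (fun q : EuclideanSpace ℝ (Fin n) × ℝ => u q.1 q.2) (Dom n T)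

/-- The payoff `g` is positive, and `sup g + Lip(g) ≤ L`. -/
def PayoffOK {n : ℕ} (g : EuclideanSpace ℝ (Fin n) → ℝ) (L : ℝ) : Prop :=
  (∀ x, 0 < g x) ∧
  ∃ B K : ℝ, B + K ≤ L ∧ (∀ x, g x ≤ B) ∧ ∀ x y, |g x - g y| ≤ K * ‖x - y‖

/-- Viscosity supersolution of `∂ₜ u − H(u,Du,D²u) = 0` with terminal data `g`. -/
def SuperSolH {n : ℕ} (T : ℝ)
    (H : ℝ → EuclideanSpace ℝ (Fin n) → Matrix (Fin n) (Fin n) ℝ → ℝ)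
    (g : EuclideanSpace ℝ (Fin n) → ℝ) (u : EuclideanSpace ℝ (Fin n) → ℝ → ℝ) : Prop :=
  LowerSemicontinuousOn (fun q : EuclideanSpace ℝ (Fin n) × ℝ => u q.1 q.2) (Dom n T) ∧
  LinGrowth T u ∧
  (∀ x, g x ≤ u x T) ∧
  ∀ x₀ t₀, t₀ ∈ Set.Ioo 0 T →
    ∀ φ φt Dφ D2φ, IsC12 φ φt Dφ D2φ →
      u x₀ t₀ = φ x₀ t₀ →
      (∀ x t, t ∈ Set.Icc 0 T → (x, t) ≠ (x₀, t₀) → φ x t < u x t) →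
      φt x₀ t₀ ≤ H (u x₀ t₀) (Dφ x₀ t₀) (D2φ x₀ t₀)

/-- Viscosity subsolution of `∂ₜ u − H(u,Du,D²u) = 0` with terminal data `g`. -/
def SubSolH {n : ℕ} (T : ℝ)
    (H : ℝ → EuclideanSpace ℝ (Fin n) → Matrix (Fin n) (Fin n) ℝ → ℝ)
    (g : EuclideanSpace ℝ (Fin n) → ℝ) (u : EuclideanSpace ℝ (Fin n) → ℝ → ℝ) : Prop :=
  UpperSemicontinuousOn (fun q : EuclideanSpace ℝ (Fin n) × ℝ => u q.1 q.2) (Dom n T) ∧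
  LinGrowth T u ∧
  (∀ x, u x T ≤ g x) ∧
  ∀ x₀ t₀, t₀ ∈ Set.Ioo 0 T →
    ∀ φ φt Dφ D2φ, IsC12 φ φt Dφ D2φ →
      u x₀ t₀ = φ x₀ t₀ →
      (∀ x t, t ∈ Set.Icc 0 T → (x, t) ≠ (x₀, t₀) → u x t < φ x t) →
      H (u x₀ t₀) (Dφ x₀ t₀) (D2φ x₀ t₀) ≤ φt x₀ t₀

/-- Continuous viscosity solution of `∂ₜ u − H(u,Du,D²u) = 0` with terminal data `g`. -/
def SolH {n : ℕ} (T : ℝ)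
    (H : ℝ → EuclideanSpace ℝ (Fin n) → Matrix (Fin n) (Fin n) ℝ → ℝ)
    (g : EuclideanSpace ℝ (Fin n) → ℝ) (u : EuclideanSpace ℝ (Fin n) → ℝ → ℝ) : Prop :=
  ContOn T u ∧ SuperSolH T H g u ∧ SubSolH T H g u

/-- Viscosity supersolution of `∂ₜ u + F(u,Du,D²u) = 0` with terminal data `g`. -/
def SuperSolF {n : ℕ} (T : ℝ) (σ : Fin n → ℝ) (μ : EuclideanSpace ℝ (Fin n)) (r : ℝ)
    (g : EuclideanSpace ℝ (Fin n) → ℝ) (u : EuclideanSpace ℝ (Fin n) → ℝ → ℝ) : Prop :=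
  LowerSemicontinuousOn (fun q : EuclideanSpace ℝ (Fin n) × ℝ => u q.1 q.2) (Dom n T) ∧
  LinGrowth T u ∧
  (∀ x, g x ≤ u x T) ∧
  ∀ x₀ t₀, t₀ ∈ Set.Ioo 0 T →
    ∀ φ φt Dφ D2φ, IsC12 φ φt Dφ D2φ →
      u x₀ t₀ = φ x₀ t₀ →
      (∀ x t, t ∈ Set.Icc 0 T → (x, t) ≠ (x₀, t₀) → φ x t < u x t) →
      (Dφ x₀ t₀ ≠ 0 →
        φt x₀ t₀ + Fop σ μ r (u x₀ t₀) (Dφ x₀ t₀) (D2φ x₀ t₀) ≤ 0) ∧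
      (Dφ x₀ t₀ = 0 →
        φt x₀ t₀ + Flower σ μ r (u x₀ t₀) (D2φ x₀ t₀) ≤ 0)

/-- Viscosity subsolution of `∂ₜ u + F(u,Du,D²u) = 0` with terminal data `g`. -/
def SubSolF {n : ℕ} (T : ℝ) (σ : Fin n → ℝ) (μ : EuclideanSpace ℝ (Fin n)) (r : ℝ)
    (g : EuclideanSpace ℝ (Fin n) → ℝ) (u : EuclideanSpace ℝ (Fin n) → ℝ → ℝ) : Prop :=
  UpperSemicontinuousOn (fun q : EuclideanSpace ℝ (Fin n) × ℝ => u q.1 q.2) (Dom n T) ∧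
  LinGrowth T u ∧
  (∀ x, u x T ≤ g x) ∧
  ∀ x₀ t₀, t₀ ∈ Set.Ioo 0 T →
    ∀ φ φt Dφ D2φ, IsC12 φ φt Dφ D2φ →
      u x₀ t₀ = φ x₀ t₀ →
      (∀ x t, t ∈ Set.Icc 0 T → (x, t) ≠ (x₀, t₀) → u x t < φ x t) →
      (Dφ x₀ t₀ ≠ 0 →
        0 ≤ φt x₀ t₀ + Fop σ μ r (u x₀ t₀) (Dφ x₀ t₀) (D2φ x₀ t₀)) ∧
      (Dφ x₀ t₀ = 0 →
        0 ≤ φt x₀ t₀ + Fupper σ μ r (u x₀ t₀) (D2φ x₀ t₀))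

/-- Continuous viscosity solution of `∂ₜ u + F(u,Du,D²u) = 0` with terminal data `g`. -/
def SolF {n : ℕ} (T : ℝ) (σ : Fin n → ℝ) (μ : EuclideanSpace ℝ (Fin n)) (r : ℝ)
    (g : EuclideanSpace ℝ (Fin n) → ℝ) (u : EuclideanSpace ℝ (Fin n) → ℝ → ℝ) : Prop :=
  ContOn T u ∧ SuperSolF T σ μ r g u ∧ SubSolF T σ μ r g u

/-- The barrier `w̄(x,t) = g(y) + (A/ε²)(T−t) + 2L(|x−y|² + ε)^{1/2}`. -/
def barrierUp {n : ℕ} (g : EuclideanSpace ℝ (Fin n) → ℝ) (L A ε T : ℝ)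
    (y : EuclideanSpace ℝ (Fin n)) : EuclideanSpace ℝ (Fin n) → ℝ → ℝ :=
  fun x t => g y + (A / ε ^ 2) * (T - t) + 2 * L * Real.sqrt (‖x - y‖ ^ 2 + ε)

/-- The barrier `w̲(x,t) = g(y) − (A/ε²)(T−t) − 2L(|x−y|² + ε)^{1/2}`. -/
def barrierDown {n : ℕ} (g : EuclideanSpace ℝ (Fin n) → ℝ) (L A ε T : ℝ)
    (y : EuclideanSpace ℝ (Fin n)) : EuclideanSpace ℝ (Fin n) → ℝ → ℝ :=
  fun x t => g y - (A / ε ^ 2) * (T - t) - 2 * L * Real.sqrt (‖x - y‖ ^ 2 + ε)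

/-- `Φ̃(θ⁺,θ⁻,d⁺,d⁻,p,M)`: the part of `Φ` sensitive to the inf–sup. -/
def PhiT {n : ℕ} (σ : Fin n → ℝ) (θp θm : EuclideanSpace ℝ (Fin n)) (dp dm : ℝ)
    (p : EuclideanSpace ℝ (Fin n)) (M : Matrix (Fin n) (Fin n) ℝ) : ℝ :=
  -(1 / 2) * sigQF σ M (θp - θm) - (dp + dm) * ⟪θp + θm, p⟫

/-- `sup_{(θ⁻,d⁻)∈ℋ_m} Φ̃(θ⁺,θ⁻,d⁺,d⁻,p,M)` as a function of `a = (θ⁺,d⁺)`. -/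
def supPhiT {n : ℕ} (σ : Fin n → ℝ) (m : ℕ) (a : EuclideanSpace ℝ (Fin n) × ℝ)
    (p : EuclideanSpace ℝ (Fin n)) (M : Matrix (Fin n) (Fin n) ℝ) : ℝ :=
  sSup ((fun b => PhiT σ a.1 b.1 a.2 b.2 p M) '' Hset n m)

/-- `Φ̃_m(p,M) = inf_{(θ⁺,d⁺)∈ℋ_m} sup_{(θ⁻,d⁻)∈ℋ_m} Φ̃`. -/
def PhiTm {n : ℕ} (σ : Fin n → ℝ) (m : ℕ)
    (p : EuclideanSpace ℝ (Fin n)) (M : Matrix (Fin n) (Fin n) ℝ) : ℝ :=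
  sInf ((fun a => supPhiT σ m a p M) '' Hset n m)

/-- The set of values appearing in the parabolic sup-convolution. -/
def supConvSet {n : ℕ} (T ε : ℝ) (u : EuclideanSpace ℝ (Fin n) → ℝ → ℝ)
    (x₀ : EuclideanSpace ℝ (Fin n)) (t₀ : ℝ) : Set ℝ :=
  {y | ∃ x t, t ∈ Set.Icc 0 T ∧ y = u x t - ((t₀ - t) ^ 2 + ‖x₀ - x‖ ^ 2) / (2 * ε)}



/-! At the controls `θ⁺ = p/|p|`, `θ⁻ = -p/|p|`, `d⁺ = d⁻ = m` the integrand `Φ` equals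
`-F(ξ,p,M) - rξ`, and this is an approximate saddle point: a player deviating to a direction at
distance `t` from the saddle direction loses at least `m|p|t²/2` through the drift term and gains
at most `2Kt` through the quadratic term, where `K = ∑ᵢⱼ |σᵢ σⱼ Mᵢⱼ|`. Hence both the sup–inf
`H_m⁺` and the inf–sup `H_m⁻` lie within `2K²/(m|p|)` of `-F`, and this error vanishes along the
sequence because `p_m → p ≠ 0`. -/

section SaddlePoint

variable {n : ℕ} (σ : Fin n → ℝ) (μ : EuclideanSpace ℝ (Fin n))
  (p : EuclideanSpace ℝ (Fin n)) (M : Matrix (Fin n) (Fin n) ℝ)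

def sigForm (u v : EuclideanSpace ℝ (Fin n)) : ℝ :=
  ∑ i, ∑ j, (σ i * u i) * M i j * (σ j * v j)

def sigQFBound : ℝ :=
  ∑ i, ∑ j, |σ i| * |σ j| * |M i j|

/-- The value of `Φ` at `θ⁺ = -θ⁻ = p/|p|`, whatever `d⁺, d⁻`. -/
def saddleValue : ℝ :=
  -2 * sigQF σ M (‖p‖⁻¹ • p) - (1 / 2) * trSig2 σ M - ⟪μ, p⟫

lemma sigQFBound_nonneg : 0 ≤ sigQFBound σ M := by
  unfold sigQFBound; positivity

lemma sigQFBound_neg : sigQFBound σ (-M) = sigQFBound σ M := by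
  simp [sigQFBound]

lemma continuous_sigQFBound : Continuous (sigQFBound σ) := by
  unfold sigQFBound; fun_prop

lemma sigQF_neg (v : EuclideanSpace ℝ (Fin n)) : sigQF σ (-M) v = -sigQF σ M v := by
  simp [sigQF]

lemma sigQF_smul (c : ℝ) (v : EuclideanSpace ℝ (Fin n)) :
    sigQF σ M (c • v) = c ^ 2 * sigQF σ M v := by
  simp only [sigQF, Finset.mul_sum, PiLp.smul_apply, smul_eq_mul]
  exact Finset.sum_congr rfl fun i _ => Finset.sum_congr rfl fun j _ => by ring

lemma abs_sigForm_le (u v : EuclideanSpace ℝ (Fin n)) :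
    |sigForm σ M u v| ≤ sigQFBound σ M * (‖u‖ * ‖v‖) := by
  unfold sigForm sigQFBound
  rw [Finset.sum_mul]
  refine (Finset.abs_sum_le_sum_abs _ _).trans (Finset.sum_le_sum fun i _ => ?_)
  rw [Finset.sum_mul]
  refine (Finset.abs_sum_le_sum_abs _ _).trans (Finset.sum_le_sum fun j _ => ?_)
  have hu : |u i| ≤ ‖u‖ := PiLp.norm_apply_le u i
  have hv : |v j| ≤ ‖v‖ := PiLp.norm_apply_le v j
  calc |σ i * u i * M i j * (σ j * v j)| = |σ i| * |σ j| * |M i j| * (|u i| * |v j|) := by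
        simp only [abs_mul]; ring
    _ ≤ |σ i| * |σ j| * |M i j| * (‖u‖ * ‖v‖) := by gcongr

lemma sigQF_sub_sigQF (u v : EuclideanSpace ℝ (Fin n)) :
    sigQF σ M u - sigQF σ M v = sigForm σ M u (u - v) + sigForm σ M (u - v) v := by
  simp only [sigQF, sigForm, ← Finset.sum_sub_distrib, ← Finset.sum_add_distrib, PiLp.sub_apply]
  exact Finset.sum_congr rfl fun i _ => Finset.sum_congr rfl fun j _ => by ring

lemma abs_sigQF_sub_le (u v : EuclideanSpace ℝ (Fin n)) :
    |sigQF σ M u - sigQF σ M v| ≤ sigQFBound σ M * ((‖u‖ + ‖v‖) * ‖u - v‖) := by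
  rw [sigQF_sub_sigQF]
  calc _ ≤ |sigForm σ M u (u - v)| + |sigForm σ M (u - v) v| := abs_add_le _ _
    _ ≤ sigQFBound σ M * (‖u‖ * ‖u - v‖) + sigQFBound σ M * (‖u - v‖ * ‖v‖) :=
        add_le_add (abs_sigForm_le σ M _ _) (abs_sigForm_le σ M _ _)
    _ = _ := by ring

lemma PhiT_eq_neg_PhiT_neg (θp θm : EuclideanSpace ℝ (Fin n)) (dp dm : ℝ) :
    PhiT σ θp θm dp dm p M = -PhiT σ (-θm) (-θp) dm dp p (-M) := by
  rw [PhiT, PhiT, sigQF_neg, show -θm - -θp = θp - θm by abel,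
    show -θm + -θp = -(θp + θm) by abel, inner_neg_left]
  ring

lemma Phi_eq_PhiT (θp θm : EuclideanSpace ℝ (Fin n)) (dp dm : ℝ) :
    Phi σ μ θp θm dp dm p M = PhiT σ θp θm dp dm p M - (1 / 2) * trSig2 σ M - ⟪μ, p⟫ := by
  rw [Phi, PhiT]; ring

lemma neg_Fop_eq (r ξ : ℝ) (hp : p ≠ 0) : -Fop σ μ r ξ p M = saddleValue σ μ p M + r * ξ := by
  have hp' : ‖p‖ ≠ 0 := norm_ne_zero_iff.mpr hp
  rw [Fop, saddleValue, sigQF_smul]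
  field_simp
  ring

lemma continuousAt_Fop (r ξ : ℝ) (hp : p ≠ 0) :
    ContinuousAt (fun x : ℝ × EuclideanSpace ℝ (Fin n) × Matrix (Fin n) (Fin n) ℝ =>
      Fop σ μ r x.1 x.2.1 x.2.2) (ξ, p, M) := by
  unfold Fop sigQF trSig2
  fun_prop (disch := simpa using hp)

lemma inner_eq_of_norm_eq_one {θ : EuclideanSpace ℝ (Fin n)} (hp : p ≠ 0) (hθ : ‖θ‖ = 1) :
    ⟪θ, p⟫ = ‖p‖ - ‖p‖ / 2 * ‖θ - ‖p‖⁻¹ • p‖ ^ 2 := by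
  have hp' : ‖p‖ ≠ 0 := norm_ne_zero_iff.mpr hp
  have hq : ‖‖p‖⁻¹ • p‖ = 1 := norm_smul_inv_norm hp
  rw [norm_sub_sq_real, real_inner_smul_right, hq, hθ]
  field_simp
  ring

lemma PhiT_lower_bound {θ : EuclideanSpace ℝ (Fin n)} {c d : ℝ} (hp : p ≠ 0) (hθ : ‖θ‖ = 1)
    (hd : 0 ≤ d) (hc : 0 < c) :
    -2 * sigQF σ M (‖p‖⁻¹ • p) - 2 * sigQFBound σ M ^ 2 / (c * ‖p‖) ≤
      PhiT σ θ (-(‖p‖⁻¹ • p)) d c p M := by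
  set q := ‖p‖⁻¹ • p
  set K := sigQFBound σ M
  set t := ‖θ - q‖
  have hq : ‖q‖ = 1 := norm_smul_inv_norm hp
  have hp' : ‖p‖ ≠ 0 := norm_ne_zero_iff.mpr hp
  have hcp : 0 < c * ‖p‖ := mul_pos hc (norm_pos_iff.mpr hp)
  have hdrift : ⟪θ + -q, p⟫ = -(‖p‖ / 2 * t ^ 2) := by
    have hqp : ⟪q, p⟫ = ‖p‖ := by
      rw [real_inner_smul_left, real_inner_self_eq_norm_sq]; field_simp
    rw [inner_add_left, inner_neg_left, hqp, inner_eq_of_norm_eq_one p hp hθ]; ring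
  have hquad : |sigQF σ M (θ + q) - 4 * sigQF σ M q| ≤ K * (4 * t) := by
    have h := abs_sigQF_sub_le σ M (θ + q) ((2 : ℝ) • q)
    rw [sigQF_smul, show θ + q - (2 : ℝ) • q = θ - q by rw [two_smul]; abel, norm_smul, hq]
      at h
    have hθq : ‖θ + q‖ ≤ 2 := (norm_add_le _ _).trans (by rw [hθ, hq]; norm_num)
    norm_num at h
    exact h.trans (mul_le_mul_of_nonneg_left (by gcongr; linarith) (sigQFBound_nonneg σ M))
  -- AM–GM: the drift penalty `c|p|t²/2` absorbs the gain `2Kt`.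
  have hamgm : 2 * K * t ≤ 2 * K ^ 2 / (c * ‖p‖) + c * ‖p‖ / 2 * t ^ 2 := by
    have h : 2 * K ^ 2 / (c * ‖p‖) + c * ‖p‖ / 2 * t ^ 2 - 2 * K * t =
        (c * ‖p‖ * t - 2 * K) ^ 2 / (2 * (c * ‖p‖)) := by
      field_simp; ring
    linarith [div_nonneg (sq_nonneg (c * ‖p‖ * t - 2 * K)) (by positivity : 0 ≤ 2 * (c * ‖p‖))]
  have hd' : 0 ≤ d * (‖p‖ / 2 * t ^ 2) := by positivity
  rw [PhiT, sub_neg_eq_add, hdrift]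
  linarith [(abs_le.mp hquad).2]

lemma PhiT_upper_bound {θ : EuclideanSpace ℝ (Fin n)} {c d : ℝ} (hp : p ≠ 0) (hθ : ‖θ‖ = 1)
    (hd : 0 ≤ d) (hc : 0 < c) :
    PhiT σ (‖p‖⁻¹ • p) θ c d p M ≤
      -2 * sigQF σ M (‖p‖⁻¹ • p) + 2 * sigQFBound σ M ^ 2 / (c * ‖p‖) := by
  have h := PhiT_lower_bound σ p (-M) (θ := -θ) hp (by rwa [norm_neg]) hd hc
  rw [sigQF_neg, sigQFBound_neg] at h
  rw [PhiT_eq_neg_PhiT_neg]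
  linarith

lemma saddleValue_sub_le_Phi {θ : EuclideanSpace ℝ (Fin n)} {c d : ℝ} (hp : p ≠ 0)
    (hθ : ‖θ‖ = 1) (hd : 0 ≤ d) (hc : 0 < c) :
    saddleValue σ μ p M - 2 * sigQFBound σ M ^ 2 / (c * ‖p‖) ≤
      Phi σ μ θ (-(‖p‖⁻¹ • p)) d c p M := by
  rw [Phi_eq_PhiT, saddleValue]
  linarith [PhiT_lower_bound σ p M hp hθ hd hc]

lemma Phi_le_saddleValue_add {θ : EuclideanSpace ℝ (Fin n)} {c d : ℝ} (hp : p ≠ 0)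
    (hθ : ‖θ‖ = 1) (hd : 0 ≤ d) (hc : 0 < c) :
    Phi σ μ (‖p‖⁻¹ • p) θ c d p M ≤
      saddleValue σ μ p M + 2 * sigQFBound σ M ^ 2 / (c * ‖p‖) := by
  rw [Phi_eq_PhiT, saddleValue]
  linarith [PhiT_upper_bound σ p M hp hθ hd hc]

end SaddlePoint

section Minimax

variable {α β : Type*} {A : Set α} {B : Set β} {f : α → β → ℝ} {L U : ℝ} {a₀ : α} {b₀ : β}

lemma sSup_image_sInf_image_mem_Icc (ha₀ : a₀ ∈ A) (hb₀ : b₀ ∈ B)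
    (hbdd : ∀ a ∈ A, BddBelow ((fun b => f a b) '' B))
    (hL : ∀ b ∈ B, L ≤ f a₀ b) (hU : ∀ a ∈ A, f a b₀ ≤ U) :
    sSup ((fun a => sInf ((fun b => f a b) '' B)) '' A) ∈ Set.Icc L U := by
  have hinf : ∀ a ∈ A, sInf ((fun b => f a b) '' B) ≤ U := fun a ha =>
    (csInf_le (hbdd a ha) (Set.mem_image_of_mem _ hb₀)).trans (hU a ha)
  refine ⟨?_, csSup_le (Set.Nonempty.image _ ⟨a₀, ha₀⟩) (Set.forall_mem_image.2 hinf)⟩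
  exact (le_csInf (Set.Nonempty.image _ ⟨b₀, hb₀⟩) (Set.forall_mem_image.2 hL)).trans
    (le_csSup ⟨U, Set.forall_mem_image.2 hinf⟩ (Set.mem_image_of_mem _ ha₀))

lemma sInf_image_sSup_image_mem_Icc (ha₀ : a₀ ∈ A) (hb₀ : b₀ ∈ B)
    (hbdd : ∀ b ∈ B, BddAbove ((fun a => f a b) '' A))
    (hL : ∀ b ∈ B, L ≤ f a₀ b) (hU : ∀ a ∈ A, f a b₀ ≤ U) :
    sInf ((fun b => sSup ((fun a => f a b) '' A)) '' B) ∈ Set.Icc L U := by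
  have hsup : ∀ b ∈ B, L ≤ sSup ((fun a => f a b) '' A) := fun b hb =>
    (hL b hb).trans (le_csSup (hbdd b hb) (Set.mem_image_of_mem _ ha₀))
  refine ⟨le_csInf (Set.Nonempty.image _ ⟨b₀, hb₀⟩) (Set.forall_mem_image.2 hsup), ?_⟩
  exact (csInf_le ⟨L, Set.forall_mem_image.2 hsup⟩ (Set.mem_image_of_mem _ hb₀)).trans
    (csSup_le (Set.Nonempty.image _ ⟨a₀, ha₀⟩) (Set.forall_mem_image.2 hU))

end Minimax

section Operators

variable {n : ℕ} (σ : Fin n → ℝ) (μ : EuclideanSpace ℝ (Fin n)) (r ξ : ℝ)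
  (p : EuclideanSpace ℝ (Fin n)) (M : Matrix (Fin n) (Fin n) ℝ) {m : ℕ}

lemma isCompact_Hset : IsCompact (Hset n m) := by
  have h : Hset n m = Metric.sphere 0 1 ×ˢ Set.Icc 0 (m : ℝ) := by ext; simp [Hset]
  rw [h]
  exact (isCompact_sphere _ _).prod isCompact_Icc

lemma mem_Hset_of_norm_eq_one {θ : EuclideanSpace ℝ (Fin n)} (hθ : ‖θ‖ = 1) :
    (θ, (m : ℝ)) ∈ Hset n m :=
  ⟨hθ, Nat.cast_nonneg m, le_rfl⟩

lemma abs_Hplus_add_Fop_le_and_abs_Hminus_add_Fop_le (hm : 0 < m) (hp : p ≠ 0) :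
    |Hplus σ μ r m ξ p M + Fop σ μ r ξ p M| ≤ 2 * sigQFBound σ M ^ 2 / (m * ‖p‖) ∧
      |Hminus σ μ r m ξ p M + Fop σ μ r ξ p M| ≤ 2 * sigQFBound σ M ^ 2 / (m * ‖p‖) := by
  have hm' : (0 : ℝ) < m := Nat.cast_pos.mpr hm
  have hq : ‖‖p‖⁻¹ • p‖ = 1 := norm_smul_inv_norm hp
  have hL : ∀ b ∈ Hset n m, saddleValue σ μ p M - 2 * sigQFBound σ M ^ 2 / (m * ‖p‖) ≤
      Phi σ μ b.1 (-(‖p‖⁻¹ • p)) b.2 m p M := fun b ⟨hθ, hd, _⟩ =>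
    saddleValue_sub_le_Phi σ μ p M hp hθ hd hm'
  have hU : ∀ a ∈ Hset n m, Phi σ μ (‖p‖⁻¹ • p) a.1 m a.2 p M ≤
      saddleValue σ μ p M + 2 * sigQFBound σ M ^ 2 / (m * ‖p‖) := fun a ⟨hθ, hd, _⟩ =>
    Phi_le_saddleValue_add σ μ p M hp hθ hd hm'
  have ha₀ := mem_Hset_of_norm_eq_one (m := m) (θ := -(‖p‖⁻¹ • p)) (by rwa [norm_neg])
  have hb₀ := mem_Hset_of_norm_eq_one (m := m) hq
  have hF : ∀ x, x + r * ξ + Fop σ μ r ξ p M = x - saddleValue σ μ p M := fun x => by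
    linarith [neg_Fop_eq σ μ p M r ξ hp]
  rw [Hplus, Hminus, hF, hF, abs_sub_comm, Set.mem_Icc_iff_abs_le, abs_sub_comm,
    Set.mem_Icc_iff_abs_le]
  exact ⟨sSup_image_sInf_image_mem_Icc ha₀ hb₀ (fun a _ => isCompact_Hset.bddBelow_image
      (Continuous.continuousOn (by unfold Phi sigQF; fun_prop))) hL hU,
    sInf_image_sSup_image_mem_Icc ha₀ hb₀ (fun b _ => isCompact_Hset.bddAbove_image
      (Continuous.continuousOn (by unfold Phi sigQF; fun_prop))) hL hU⟩

end Operators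

lemma tendsto_neg_of_abs_add_le {ι : Type*} {l : Filter ι} {x y e : ι → ℝ} {c : ℝ}
    (hy : Tendsto y l (𝓝 c)) (he : Tendsto e l (𝓝 0)) (hxy : ∀ᶠ i in l, |x i + y i| ≤ e i) :
    Tendsto x l (𝓝 (-c)) := by
  have h : Tendsto (fun i => x i + y i) l (𝓝 0) := squeeze_zero_norm' hxy he
  simpa using h.sub hy

theorem bellman_isaacs_operators_converge_general (n : ℕ)
    (σ : Fin n → ℝ) (μ : EuclideanSpace ℝ (Fin n)) (r : ℝ)
    (ξs : ℕ → ℝ) (ps : ℕ → EuclideanSpace ℝ (Fin n)) (Ms : ℕ → Matrix (Fin n) (Fin n) ℝ)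
    (ξ : ℝ) (p : EuclideanSpace ℝ (Fin n)) (M : Matrix (Fin n) (Fin n) ℝ)
    (hp : p ≠ 0)
    (hξ : Tendsto ξs atTop (𝓝 ξ)) (hpt : Tendsto ps atTop (𝓝 p))
    (hMt : Tendsto Ms atTop (𝓝 M)) :
    Tendsto (fun m => Hplus σ μ r m (ξs m) (ps m) (Ms m)) atTop (𝓝 (-Fop σ μ r ξ p M)) ∧
    Tendsto (fun m => Hminus σ μ r m (ξs m) (ps m) (Ms m)) atTop (𝓝 (-Fop σ μ r ξ p M)) := by
  have hF : Tendsto (fun m => Fop σ μ r (ξs m) (ps m) (Ms m)) atTop (𝓝 (Fop σ μ r ξ p M)) :=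
    (continuousAt_Fop σ μ p M r ξ hp).tendsto.comp (hξ.prodMk_nhds (hpt.prodMk_nhds hMt)) |>.congr
      fun _ => rfl
  have hdenom : Tendsto (fun m : ℕ => (m : ℝ) * ‖ps m‖) atTop atTop :=
    tendsto_natCast_atTop_atTop.atTop_mul_pos (norm_pos_iff.mpr hp) hpt.norm
  have herr : Tendsto (fun m : ℕ => 2 * sigQFBound σ (Ms m) ^ 2 / (m * ‖ps m‖)) atTop (𝓝 0) :=
    ((((continuous_sigQFBound σ).tendsto M).comp hMt).pow 2 |>.const_mul 2).div_atTop hdenom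
  have hbound := ((eventually_gt_atTop 0).and (hpt.eventually_ne hp)).mono fun m hm =>
    abs_Hplus_add_Fop_le_and_abs_Hminus_add_Fop_le σ μ r (ξs m) (ps m) (Ms m) hm.1 hm.2
  exact ⟨tendsto_neg_of_abs_add_le hF herr (hbound.mono fun _ h => h.1),
    tendsto_neg_of_abs_add_le hF herr (hbound.mono fun _ h => h.2)⟩

/-- Lemma 5.1: convergence of the Bellman–Isaacs operators,
`H_m^±(ξ_m, p_m, M_m) → −F(ξ, p, M)` as `m → ∞`. -/
theorem bellman_isaacs_operators_converge (n : ℕ) (hn : 1 ≤ n)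
    (σ : Fin n → ℝ) (hσ : ∀ i, 0 < σ i) (μ : EuclideanSpace ℝ (Fin n))
    (r : ℝ) (hr : 0 ≤ r)
    (ξs : ℕ → ℝ) (ps : ℕ → EuclideanSpace ℝ (Fin n)) (Ms : ℕ → Matrix (Fin n) (Fin n) ℝ)
    (ξ : ℝ) (p : EuclideanSpace ℝ (Fin n)) (M : Matrix (Fin n) (Fin n) ℝ)
    (hMs : ∀ m, (Ms m).IsSymm) (hM : M.IsSymm)
    (hps : ∀ m, ps m ≠ 0) (hp : p ≠ 0)
    (hξ : Tendsto ξs atTop (𝓝 ξ)) (hpt : Tendsto ps atTop (𝓝 p))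
    (hMt : Tendsto Ms atTop (𝓝 M)) :
    Tendsto (fun m => Hplus σ μ r m (ξs m) (ps m) (Ms m)) atTop (𝓝 (-Fop σ μ r ξ p M)) ∧
    Tendsto (fun m => Hminus σ μ r m (ξs m) (ps m) (Ms m)) atTop (𝓝 (-Fop σ μ r ξ p M)) :=
  bellman_isaacs_operators_converge_general n σ μ r ξs ps Ms ξ p M hp hξ hpt hMt

end TugOfWar
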